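/- arXiv:cs/0611106 — 3 statements merged into one kernel-verified Lean document; each statement's English description precedes it below -/
import Mathlib

section
/- Let p(y) = Σ_{n=1}^N π_n K_n(y) be a mixture density with π_n > 0 summing to 1, each K_n bounded (sup K_n < ∞), and let Ω_1,…,Ω_N be pairwise disjoint measurable subsets of ℝ. Define ε_n = ∫_{ℝ∖Ω_n} K_n(y) dy and ε'_n = ∫_{ℝ∖Ω_n} K_n(y) log(sup K_n / K_n(y)) dy. Then H(p) ≥ Σ_n π_n H(K_n) + h(π) − Σ_n π_n ε'_n − Σ_n π_n [log(max_m sup K_m / (π_n sup K_n)) + 1] ε_n. -/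
/-!
Write `H(p) = -∑ₙ πₙ ∫ Kₙ log p` and split each integral at `Ωₙ`. Off `Ωₙ`, bound `p` by
`M = maxₘ sup Kₘ`. On `Ωₙ`, compare `p` with its own component `πₙ Kₙ ≤ p` through `log t ≤ t - 1`,
i.e. `Kₙ log p ≤ Kₙ log (πₙ Kₙ) + p / πₙ - Kₙ`, and note that the part of `∫ Kₙ log Kₙ` lying off
`Ωₙ` is `εₙ log (sup Kₙ) - ε'ₙ`. What remains is `∑ₙ ∫_{Ωₙ} p - 1`, which is `≤ 0` because the `Ωₙ`
are disjoint and `p` is a probability density.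
-/

open MeasureTheory Real Function

namespace Real

lemma mul_log_le_mul_log_add {a c x : ℝ} (ha : 0 ≤ a) (hc : 0 < c) (hcax : c * a ≤ x) :
    a * log x ≤ a * log c + a * log a + x / c - a := by
  rcases ha.eq_or_lt with rfl | ha
  · simpa using div_nonneg (by simpa using hcax) hc.le
  have hca : 0 < c * a := mul_pos hc ha
  have hx : 0 < x := hca.trans_le hcax
  have hlog := log_le_sub_one_of_pos (div_pos hx hca)
  rw [log_div hx.ne' hca.ne', log_mul hc.ne' ha.ne'] at hlog
  calc a * log x ≤ a * (log c + log a + (x / (c * a) - 1)) := by gcongr; linarith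
    _ = a * log c + a * log a + x / c - a := by field_simp; ring

lemma mul_log_le_mul_log_of_le {a c x M : ℝ} (ha : 0 ≤ a) (hc : 0 < c) (hcax : c * a ≤ x)
    (hxM : x ≤ M) : a * log x ≤ a * log M := by
  rcases ha.eq_or_lt with rfl | ha
  · simp
  · exact mul_le_mul_of_nonneg_left (log_le_log ((mul_pos hc ha).trans_le hcax) hxM) ha.le

lemma abs_mul_log_le {a c x M : ℝ} (ha : 0 ≤ a) (hc : 0 < c) (hcax : c * a ≤ x) (hxM : x ≤ M) :
    |a * log x| ≤ |x * log x| / c + max (log M) 0 * a := by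
  rcases ha.eq_or_lt with rfl | ha
  · simp only [zero_mul, abs_zero, mul_zero, add_zero]
    positivity
  have hx : 0 < x := (mul_pos hc ha).trans_le hcax
  rcases le_or_gt x 1 with hx1 | hx1
  · have hlog : log x ≤ 0 := log_nonpos hx.le hx1
    have hac : a ≤ x / c := by rw [le_div_iff₀ hc, mul_comm]; exact hcax
    rw [abs_of_nonpos (mul_nonpos_of_nonneg_of_nonpos ha.le hlog),
      abs_of_nonpos (mul_nonpos_of_nonneg_of_nonpos hx.le hlog)]
    calc -(a * log x) = a * -log x := by ring
      _ ≤ x / c * -log x := by gcongr; linarith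
      _ = -(x * log x) / c := by ring
      _ ≤ _ := le_add_of_nonneg_right (by positivity)
  · rw [abs_of_nonneg (mul_nonneg ha.le (log_pos hx1).le)]
    calc a * log x ≤ a * log M := mul_log_le_mul_log_of_le ha.le hc hcax hxM
      _ ≤ max (log M) 0 * a := by rw [mul_comm]; gcongr; exact le_max_left _ _
      _ ≤ _ := le_add_of_nonneg_left (by positivity)

lemma mul_log_div {a S : ℝ} (hS : S ≠ 0) : a * log (S / a) = a * log S - a * log a := by
  rcases eq_or_ne a 0 with rfl | ha
  · simp
  · rw [log_div hS ha]; ring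

end Real

lemma Finset.sum_mul_le_of_le {ι : Type*} (s : Finset ι) {w f : ι → ℝ} {M : ℝ}
    (hw : ∀ i ∈ s, 0 ≤ w i) (hw1 : ∑ i ∈ s, w i = 1) (hf : ∀ i ∈ s, f i ≤ M) :
    ∑ i ∈ s, w i * f i ≤ M :=
  calc ∑ i ∈ s, w i * f i ≤ ∑ i ∈ s, w i * M :=
        Finset.sum_le_sum fun i hi => mul_le_mul_of_nonneg_left (hf i hi) (hw i hi)
    _ = M := by rw [← Finset.sum_mul, hw1, one_mul]

namespace MeasureTheory

variable {α : Type*} [MeasurableSpace α] {μ : Measure α} {K p : α → ℝ} {c w S M : ℝ}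

lemma Integrable.mul_log_of_mul_le_of_le (hK : Integrable K μ) (hp : AEStronglyMeasurable p μ)
    (hplogp : Integrable (fun y => p y * log (p y)) μ) (hK0 : 0 ≤ K) (hc : 0 < c)
    (hcKp : ∀ y, c * K y ≤ p y) (hpM : ∀ y, p y ≤ M) :
    Integrable (fun y => K y * log (p y)) μ :=
  ((hplogp.abs.div_const c).add (hK.const_mul (max (log M) 0))).mono'
    (hK.aestronglyMeasurable.mul hp.aemeasurable.log.aestronglyMeasurable)
    (ae_of_all _ fun y => abs_mul_log_le (hK0 y) hc (hcKp y) (hpM y))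

lemma integral_mul_log_le_of_mul_le (hK : Integrable K μ)
    (hKlogK : Integrable (fun y => K y * log (K y)) μ) (hp : Integrable p μ)
    (hKlogp : Integrable (fun y => K y * log (p y)) μ) (hK0 : 0 ≤ K) (hc : 0 < c)
    (hcKp : ∀ y, c * K y ≤ p y) :
    ∫ y, K y * log (p y) ∂μ
      ≤ log c * ∫ y, K y ∂μ + ∫ y, K y * log (K y) ∂μ + (∫ y, p y ∂μ) / c - ∫ y, K y ∂μ := by
  have h₁ : Integrable (fun y => K y * log c) μ := hK.mul_const _
  have h₂ : Integrable (fun y => K y * log c + K y * log (K y)) μ := h₁.add hKlogK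
  have h₃ : Integrable (fun y => K y * log c + K y * log (K y) + p y / c) μ :=
    h₂.add (hp.div_const c)
  calc ∫ y, K y * log (p y) ∂μ
      ≤ ∫ y, (K y * log c + K y * log (K y) + p y / c - K y) ∂μ :=
        integral_mono hKlogp (h₃.sub hK) fun y => mul_log_le_mul_log_add (hK0 y) hc (hcKp y)
    _ = _ := by
      rw [integral_sub h₃ hK, integral_add h₂ (hp.div_const c), integral_add h₁ hKlogK,
        integral_mul_const, integral_div]
      ring

lemma integral_mul_log_le_log_mul_integral (hK : Integrable K μ)
    (hKlogp : Integrable (fun y => K y * log (p y)) μ) (hK0 : 0 ≤ K) (hc : 0 < c)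
    (hcKp : ∀ y, c * K y ≤ p y) (hpM : ∀ y, p y ≤ M) :
    ∫ y, K y * log (p y) ∂μ ≤ log M * ∫ y, K y ∂μ :=
  calc ∫ y, K y * log (p y) ∂μ ≤ ∫ y, K y * log M ∂μ :=
        integral_mono hKlogp (hK.mul_const _)
          fun y => mul_log_le_mul_log_of_le (hK0 y) hc (hcKp y) (hpM y)
    _ = log M * ∫ y, K y ∂μ := by rw [integral_mul_const, mul_comm]

lemma integral_mul_log_div (hS : S ≠ 0) (hK : Integrable K μ)
    (hKlogK : Integrable (fun y => K y * log (K y)) μ) :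
    ∫ y, K y * log (S / K y) ∂μ = log S * ∫ y, K y ∂μ - ∫ y, K y * log (K y) ∂μ := by
  simp_rw [mul_log_div hS]
  rw [integral_sub (hK.mul_const _) hKlogK, integral_mul_const, mul_comm]

lemma ciSup_pos_of_integral_ne_zero {f : α → ℝ} (hf0 : 0 ≤ f) (hf : BddAbove (Set.range f))
    (hint : ∫ x, f x ∂μ ≠ 0) : 0 < ⨆ x, f x := by
  obtain ⟨y, hy⟩ := exists_ne_zero_of_integral_ne_zero hint
  exact ((hf0 y).lt_of_ne' hy).trans_le (le_ciSup hf y)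

lemma sum_setIntegral_le_integral {ι : Type*} [Fintype ι] {Ω : ι → Set α}
    (hΩ : ∀ i, MeasurableSet (Ω i)) (hd : Pairwise (Disjoint on Ω)) {f : α → ℝ}
    (hf : Integrable f μ) (hf0 : 0 ≤ᵐ[μ] f) :
    ∑ i, ∫ x in Ω i, f x ∂μ ≤ ∫ x, f x ∂μ := by
  rw [← integral_iUnion_fintype hΩ hd fun i => hf.integrableOn]
  exact setIntegral_le_integral hf hf0

lemma integral_sum_mul_mul {ι : Type*} [Fintype ι] (w : ι → ℝ) {K : ι → α → ℝ} {g : α → ℝ}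
    (h : ∀ i, Integrable (fun y => K i y * g y) μ) :
    ∫ y, (∑ i, w i * K i y) * g y ∂μ = ∑ i, w i * ∫ y, K i y * g y ∂μ := by
  simp_rw [Finset.sum_mul, mul_assoc]
  rw [integral_finsetSum _ fun i _ => (h i).const_mul (w i)]
  simp_rw [integral_const_mul]

theorem mul_integral_mul_log_le_of_mul_le_of_le {Ω : Set α} (hΩ : MeasurableSet Ω) (hw : 0 < w)
    (hS : 0 < S) (hSM : S ≤ M) (hK0 : 0 ≤ K) (hK1 : ∫ y, K y ∂μ = 1)
    (hKlogK : Integrable (fun y => K y * log (K y)) μ) (hp : Integrable p μ)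
    (hKlogp : Integrable (fun y => K y * log (p y)) μ) (hwKp : ∀ y, w * K y ≤ p y)
    (hpM : ∀ y, p y ≤ M) :
    w * ∫ y, K y * log (p y) ∂μ
      ≤ w * ∫ y, K y * log (K y) ∂μ + w * log w + w * ∫ y in Ωᶜ, K y * log (S / K y) ∂μ
        + w * (log (M / (w * S)) + 1) * ∫ y in Ωᶜ, K y ∂μ + ((∫ y in Ω, p y ∂μ) - w) := by
  have hK : Integrable K μ := .of_integral_ne_zero (by simp [hK1])
  have hM : 0 < M := hS.trans_le hSM
  have hin := integral_mul_log_le_of_mul_le (μ := μ.restrict Ω) hK.integrableOn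
    hKlogK.integrableOn hp.integrableOn hKlogp.integrableOn hK0 hw hwKp
  have hout := integral_mul_log_le_log_mul_integral (μ := μ.restrict Ωᶜ) hK.integrableOn
    hKlogp.integrableOn hK0 hw hwKp hpM
  have hε' := integral_mul_log_div (μ := μ.restrict Ωᶜ) hS.ne' hK.integrableOn hKlogK.integrableOn
  have hmass : ∫ y in Ω, K y ∂μ = 1 - ∫ y in Ωᶜ, K y ∂μ := by
    linarith [integral_add_compl hΩ hK]
  rw [hmass] at hin
  have hsplit := integral_add_compl hΩ hKlogp
  have hsplitK := integral_add_compl hΩ hKlogK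
  have hbound : ∫ y, K y * log (p y) ∂μ
      ≤ ∫ y, K y * log (K y) ∂μ + log w + ∫ y in Ωᶜ, K y * log (S / K y) ∂μ
        + (log M - log w - log S + 1) * ∫ y in Ωᶜ, K y ∂μ + (∫ y in Ω, p y ∂μ) / w - 1 := by
    linarith
  rw [log_div hM.ne' (mul_pos hw hS).ne', log_mul hw.ne' hS.ne']
  refine (mul_le_mul_of_nonneg_left hbound hw.le).trans_eq ?_
  field_simp
  ring

end MeasureTheory

theorem mixture_entropy_lower_bound_general
    (N : ℕ) (w : Fin N → ℝ) (K : Fin N → ℝ → ℝ)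
    (hwpos : ∀ n, 0 < w n) (hwsum : ∑ n, w n = 1)
    (hKnonneg : ∀ n y, 0 ≤ K n y)
    (hKdens : ∀ n, ∫ y, K n y = 1)
    (hKbdd : ∀ n, BddAbove (Set.range (K n)))
    (hKent : ∀ n, Integrable (fun y => K n y * Real.log (K n y)))
    (Ω : Fin N → Set ℝ) (hΩmeas : ∀ n, MeasurableSet (Ω n))
    (hΩdisj : ∀ n m, n ≠ m → Disjoint (Ω n) (Ω m))
    (ε ε' : Fin N → ℝ)
    (hε : ∀ n, ε n = ∫ y in (Ω n)ᶜ, K n y)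
    (hε' : ∀ n, ε' n = ∫ y in (Ω n)ᶜ, K n y * Real.log ((⨆ x, K n x) / K n y))
    (p : ℝ → ℝ) (hp : ∀ y, p y = ∑ n, w n * K n y)
    (hpent : Integrable (fun y => p y * Real.log (p y))) :
    (∑ n, w n * (-∫ y, K n y * Real.log (K n y))) + (-∑ n, w n * Real.log (w n))
        - (∑ n, w n * ε' n)
        - (∑ n, w n * (Real.log ((⨆ m, ⨆ x, K m x) / (w n * ⨆ x, K n x)) + 1) * ε n)
      ≤ -∫ y, p y * Real.log (p y) := by
  obtain rfl : p = fun y => ∑ n, w n * K n y := funext hp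
  have hKint : ∀ n, Integrable (K n) := fun n => .of_integral_ne_zero (by simp [hKdens n])
  have hSpos : ∀ n, 0 < ⨆ x, K n x := fun n =>
    ciSup_pos_of_integral_ne_zero (μ := volume) (hKnonneg n) (hKbdd n) (by simp [hKdens n])
  have hSM : ∀ n, (⨆ x, K n x) ≤ ⨆ m, ⨆ x, K m x := le_ciSup (Set.finite_range _).bddAbove
  have hwKp : ∀ n y, w n * K n y ≤ ∑ m, w m * K m y := fun n y =>
    Finset.single_le_sum (fun m _ => mul_nonneg (hwpos m).le (hKnonneg m y)) (Finset.mem_univ n)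
  have hpM : ∀ y, ∑ n, w n * K n y ≤ ⨆ m, ⨆ x, K m x := fun y =>
    Finset.univ.sum_mul_le_of_le (fun n _ => (hwpos n).le) hwsum
      fun n _ => (le_ciSup (hKbdd n) y).trans (hSM n)
  have hpint : Integrable fun y => ∑ n, w n * K n y :=
    integrable_finsetSum _ fun n _ => (hKint n).const_mul (w n)
  have hKlogp : ∀ n, Integrable fun y => K n y * log (∑ m, w m * K m y) := fun n =>
    (hKint n).mul_log_of_mul_le_of_le hpint.aestronglyMeasurable hpent (hKnonneg n) (hwpos n)
      (hwKp n) hpM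
  have hcomp := fun n => mul_integral_mul_log_le_of_mul_le_of_le (hΩmeas n) (hwpos n) (hSpos n)
    (hSM n) (hKnonneg n) (hKdens n) (hKent n) hpint (hKlogp n) (hwKp n) hpM
  have hp0 : ∀ y, 0 ≤ ∑ n, w n * K n y := fun y =>
    Finset.sum_nonneg fun n _ => mul_nonneg (hwpos n).le (hKnonneg n y)
  have hleak : ∑ n, ∫ y in Ω n, ∑ m, w m * K m y ≤ 1 :=
    calc _ ≤ ∫ y, ∑ m, w m * K m y :=
          sum_setIntegral_le_integral hΩmeas hΩdisj hpint (ae_of_all _ hp0)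
      _ = 1 := by
        rw [integral_finsetSum _ fun n _ => (hKint n).const_mul _]
        simp [integral_const_mul, hKdens, hwsum]
  rw [integral_sum_mul_mul w hKlogp]
  simp only [hε, hε', mul_neg, Finset.sum_neg_distrib] at hcomp ⊢
  have := Finset.sum_le_sum fun n (_ : n ∈ Finset.univ) => hcomp n
  simp only [Finset.sum_add_distrib, Finset.sum_sub_distrib, hwsum] at this
  linarith

/-- Entropy lower bound for a mixture density with nearly-disjoint modes. -/
theorem mixture_entropy_lower_bound
    (N : ℕ) (hN : 0 < N) (w : Fin N → ℝ) (K : Fin N → ℝ → ℝ)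
    (hwpos : ∀ n, 0 < w n) (hwsum : ∑ n, w n = 1)
    (hKnonneg : ∀ n y, 0 ≤ K n y)
    (hKdens : ∀ n, ∫ y, K n y = 1)
    (hKbdd : ∀ n, BddAbove (Set.range (K n)))
    (hKent : ∀ n, Integrable (fun y => K n y * Real.log (K n y)))
    (Ω : Fin N → Set ℝ) (hΩmeas : ∀ n, MeasurableSet (Ω n))
    (hΩdisj : ∀ n m, n ≠ m → Disjoint (Ω n) (Ω m))
    (ε ε' : Fin N → ℝ)
    (hε : ∀ n, ε n = ∫ y in (Ω n)ᶜ, K n y)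
    (hε' : ∀ n, ε' n = ∫ y in (Ω n)ᶜ, K n y * Real.log ((⨆ x, K n x) / K n y))
    (p : ℝ → ℝ) (hp : ∀ y, p y = ∑ n, w n * K n y)
    (hpent : Integrable (fun y => p y * Real.log (p y))) :
    (∑ n, w n * (-∫ y, K n y * Real.log (K n y))) + (-∑ n, w n * Real.log (w n))
        - (∑ n, w n * ε' n)
        - (∑ n, w n * (Real.log ((⨆ m, ⨆ x, K m x) / (w n * ⨆ x, K n x)) + 1) * ε n)
      ≤ -∫ y, p y * Real.log (p y) :=
  mixture_entropy_lower_bound_general N w K hwpos hwsum hKnonneg hKdens hKbdd hKent Ω hΩmeas hΩdisj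
    ε ε' hε hε' p hp hpent
end

section
/- Let p = Σ_{n=1}^N π_n K_n with K_n(y) = (1/σ_n)K((y−μ_n)/σ_n), K a bounded density of finite entropy, μ_1 < … < μ_N, and d_n = min(μ_n − μ_{n−1}, μ_{n+1} − μ_n) (with μ_0 = −∞, μ_{N+1} = +∞). Then H(p) ≤ H(K) + Σ_n π_n log σ_n + h(π), and H(p) converges to this upper bound as min_n (d_n/σ_n) → ∞. -/
/-!
Write the mixture density as `p = ∑ aᵢ` with `aᵢ(y) = wᵢ σᵢ⁻¹ K((y - μᵢ)/σᵢ)`; an affine change of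
variables gives `∫ aᵢ log aᵢ = wᵢ (∫ K log K + log wᵢ - log σᵢ)`. Pointwise `aᵢ log aᵢ ≤ aᵢ log p`,
which integrates to the upper bound on `H(p)`. Conversely, for every `t > 0`,
`a log (a + b) ≤ a log a + t a + b / t`, because
`a + b ≤ (1 + t)(a + b / t) ≤ a exp (t + b / (t a))`.
Take `t = s` on the ball `Ωᵢ` of radius `R σᵢ` about `μᵢ` and `t = 1 / s` off it. Since the balls
are disjoint, the mass of the other components inside `Ωᵢ` is controlled by the mass of the
components outside their own balls, and the entropy defect is at most `N s + 2 τ(R) / s` with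
`τ(R) = ∫_{|x| ≥ R} K`. Now `τ(R) → 0`, so choosing `s` small and then `R` large makes the defect
smaller than any `ε > 0`.
-/

open MeasureTheory Real Set Filter Topology Function

lemma mul_log_add_le {a b t : ℝ} (ha : 0 ≤ a) (hb : 0 ≤ b) (ht : 0 < t) :
    a * log (a + b) ≤ a * log a + t * a + b / t := by
  rcases ha.eq_or_lt with rfl | ha
  · simpa using div_nonneg hb ht.le
  have hle : a + b ≤ a * exp (t + b / (t * a)) := by
    calc a + b ≤ (t + 1) * (a * (b / (t * a) + 1)) := by
          field_simp
          nlinarith [mul_pos ht ha, mul_nonneg ht.le hb]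
      _ ≤ exp t * (a * exp (b / (t * a))) := by
          gcongr
          · exact add_one_le_exp t
          · exact add_one_le_exp _
      _ = a * exp (t + b / (t * a)) := by rw [exp_add]; ring
  have hlog := log_le_log (by positivity) hle
  rw [log_mul ha.ne' (exp_pos _).ne', log_exp] at hlog
  calc a * log (a + b) ≤ a * (log a + (t + b / (t * a))) := mul_le_mul_of_nonneg_left hlog ha.le
    _ = a * log a + t * a + b / t := by field_simp; ring

lemma mul_log_add_le_indicator {α : Type*} (Ω : Set α) {f g : α → ℝ} {x : α} (hf : 0 ≤ f x)
    (hg : 0 ≤ g x) {s : ℝ} (hs : 0 < s) :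
    f x * log (f x + g x) ≤
      f x * log (f x) + s * (f x + g x) + s⁻¹ * (Ω.indicator g x + Ωᶜ.indicator f x) := by
  by_cases hx : x ∈ Ω
  · have h := mul_log_add_le hf hg hs
    simp only [indicator_of_mem hx, indicator_of_notMem (notMem_compl_iff.2 hx), add_zero]
    rw [div_eq_inv_mul] at h
    nlinarith [mul_nonneg hs.le hg]
  · have h := mul_log_add_le hf hg (inv_pos.2 hs)
    simp only [indicator_of_notMem hx, indicator_of_mem (mem_compl hx), zero_add]
    rw [div_inv_eq_mul] at h
    nlinarith [mul_nonneg hs.le hf]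

lemma mul_log_mul (x y : ℝ) : x * y * log (x * y) = y * (x * log x) + x * (y * log y) := by
  have h := negMulLog_mul x y
  simp only [negMulLog] at h
  linarith

lemma Finset.sum_mul_log_le_mul_log_sum {ι : Type*} (s : Finset ι) {a : ι → ℝ}
    (ha : ∀ i ∈ s, 0 ≤ a i) :
    ∑ i ∈ s, a i * log (a i) ≤ (∑ i ∈ s, a i) * log (∑ i ∈ s, a i) := by
  rw [Finset.sum_mul]
  refine Finset.sum_le_sum fun i hi => ?_
  rcases (ha i hi).eq_or_lt with h | h
  · simp [← h]
  · exact mul_le_mul_of_nonneg_left (log_le_log h (Finset.single_le_sum ha hi)) h.le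

section Disjoint

variable {ι α : Type*} [Fintype ι] {Ω : ι → Set α} {a : ι → α → ℝ}

lemma sum_indicator_sum_sub_le (hΩ : Pairwise (Disjoint on Ω)) (ha : ∀ i x, 0 ≤ a i x) (x : α) :
    ∑ i, (Ω i).indicator (fun y => ∑ j, a j y - a i y) x ≤ ∑ i, (Ω i)ᶜ.indicator (a i) x := by
  classical
  by_cases hx : ∃ k, x ∈ Ω k
  · obtain ⟨k, hk⟩ := hx
    have hout : ∀ i ≠ k, x ∉ Ω i := fun i hi hxi => disjoint_left.1 (hΩ hi) hxi hk
    rw [Finset.sum_eq_single k (fun i _ hi => indicator_of_notMem (hout i hi) _) (by simp),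
      indicator_of_mem hk, ← Finset.sum_erase_eq_sub (Finset.mem_univ k),
      ← Finset.add_sum_erase _ _ (Finset.mem_univ k), indicator_of_notMem (by simpa using hk),
      zero_add]
    exact Finset.sum_le_sum fun i hi =>
      (indicator_of_mem (hout i (Finset.ne_of_mem_erase hi)) _).ge
  · rw [not_exists] at hx
    simp only [indicator_of_notMem (hx _), Finset.sum_const_zero]
    exact Finset.sum_nonneg fun i _ => indicator_nonneg (fun y _ => ha i y) x

lemma mul_log_sum_le_of_pairwise_disjoint (hΩ : Pairwise (Disjoint on Ω)) (ha : ∀ i x, 0 ≤ a i x)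
    {s : ℝ} (hs : 0 < s) (x : α) :
    (∑ i, a i x) * log (∑ i, a i x) ≤ ∑ i, a i x * log (a i x) +
      Fintype.card ι * s * ∑ i, a i x + 2 * s⁻¹ * ∑ i, (Ω i)ᶜ.indicator (a i) x := by
  set q : ι → α → ℝ := fun i y => ∑ j, a j y - a i y
  have hq : ∀ i, 0 ≤ q i x := fun i =>
    sub_nonneg.2 (Finset.single_le_sum (fun j _ => ha j x) (Finset.mem_univ i))
  have hterm : ∀ i, a i x * log (∑ j, a j x) ≤ a i x * log (a i x) + s * ∑ j, a j x +
      s⁻¹ * ((Ω i).indicator (q i) x + (Ω i)ᶜ.indicator (a i) x) := fun i => by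
    simpa only [q, add_sub_cancel] using mul_log_add_le_indicator (Ω i) (ha i x) (hq i) hs
  calc (∑ i, a i x) * log (∑ i, a i x) = ∑ i, a i x * log (∑ j, a j x) := Finset.sum_mul ..
    _ ≤ ∑ i, (a i x * log (a i x) + s * ∑ j, a j x +
        s⁻¹ * ((Ω i).indicator (q i) x + (Ω i)ᶜ.indicator (a i) x)) :=
        Finset.sum_le_sum fun i _ => hterm i
    _ = ∑ i, a i x * log (a i x) + Fintype.card ι * s * ∑ i, a i x +
        s⁻¹ * (∑ i, (Ω i).indicator (q i) x + ∑ i, (Ω i)ᶜ.indicator (a i) x) := by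
        simp only [Finset.sum_add_distrib, ← Finset.mul_sum, Finset.sum_const, Finset.card_univ,
          nsmul_eq_mul]
        ring
    _ ≤ _ := by
        linarith [mul_le_mul_of_nonneg_left (sum_indicator_sum_sub_le hΩ ha x) (inv_nonneg.2 hs.le)]

end Disjoint

section Integral

variable {ι α : Type*} [Fintype ι] [MeasurableSpace α] {μ : Measure α} {a : ι → α → ℝ}

theorem sum_integral_mul_log_le_integral_mul_log_sum (ha : ∀ i x, 0 ≤ a i x)
    (ha_log : ∀ i, Integrable (fun x => a i x * log (a i x)) μ)
    (hp_log : Integrable (fun x => (∑ i, a i x) * log (∑ i, a i x)) μ) :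
    ∑ i, ∫ x, a i x * log (a i x) ∂μ ≤ ∫ x, (∑ i, a i x) * log (∑ i, a i x) ∂μ := by
  rw [← integral_finsetSum _ fun i _ => ha_log i]
  exact integral_mono (integrable_finsetSum _ fun i _ => ha_log i) hp_log
    fun x => Finset.sum_mul_log_le_mul_log_sum _ fun i _ => ha i x

theorem integral_mul_log_sum_le {Ω : ι → Set α} (hΩm : ∀ i, MeasurableSet (Ω i))
    (hΩ : Pairwise (Disjoint on Ω)) (ha : ∀ i x, 0 ≤ a i x) (ha_int : ∀ i, Integrable (a i) μ)
    (ha_log : ∀ i, Integrable (fun x => a i x * log (a i x)) μ)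
    (hp_log : Integrable (fun x => (∑ i, a i x) * log (∑ i, a i x)) μ) {s : ℝ} (hs : 0 < s) :
    ∫ x, (∑ i, a i x) * log (∑ i, a i x) ∂μ ≤ ∑ i, ∫ x, a i x * log (a i x) ∂μ +
      Fintype.card ι * s * ∫ x, ∑ i, a i x ∂μ + 2 * s⁻¹ * ∑ i, ∫ x in (Ω i)ᶜ, a i x ∂μ := by
  have h_log := integrable_finsetSum Finset.univ fun i _ => ha_log i
  have h_sum := integrable_finsetSum Finset.univ fun i _ => ha_int i
  have h_tail := integrable_finsetSum Finset.univ fun i _ => (ha_int i).indicator (hΩm i).compl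
  have h_main : Integrable (fun x => ∑ i, a i x * log (a i x) +
      Fintype.card ι * s * ∑ i, a i x) μ := h_log.add (h_sum.const_mul _)
  calc _ ≤ ∫ x, (∑ i, a i x * log (a i x) + Fintype.card ι * s * ∑ i, a i x +
        2 * s⁻¹ * ∑ i, (Ω i)ᶜ.indicator (a i) x) ∂μ :=
        integral_mono hp_log (h_main.add (h_tail.const_mul _))
          (mul_log_sum_le_of_pairwise_disjoint hΩ ha hs)
    _ = _ := by
        rw [integral_add h_main (h_tail.const_mul _), integral_add h_log (h_sum.const_mul _),
          integral_const_mul, integral_const_mul, integral_finsetSum _ fun i _ => ha_log i,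
          integral_finsetSum _ fun i _ => (ha_int i).indicator (hΩm i).compl]
        simp only [integral_indicator (hΩm _).compl]

end Integral

section LocationScale

lemma integral_comp_sub_div_right (g : ℝ → ℝ) (m : ℝ) {σ : ℝ} (hσ : 0 < σ) :
    ∫ y, g ((y - m) / σ) = σ * ∫ x, g x := by
  rw [integral_sub_right_eq_self (fun z => g (z / σ)) m, Measure.integral_comp_div,
    abs_of_pos hσ, smul_eq_mul]

lemma MeasureTheory.Integrable.comp_sub_div_right {g : ℝ → ℝ} (hg : Integrable g) (m : ℝ)
    {σ : ℝ} (hσ : σ ≠ 0) :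
    Integrable fun y => g ((y - m) / σ) :=
  (hg.comp_div hσ).comp_sub_right m

variable {K : ℝ → ℝ} (w m : ℝ) {σ : ℝ}

lemma integral_locScale (hσ : 0 < σ) :
    ∫ y, w * (σ⁻¹ * K ((y - m) / σ)) = w * ∫ x, K x := by
  rw [integral_const_mul, integral_const_mul, integral_comp_sub_div_right K m hσ,
    inv_mul_cancel_left₀ hσ.ne']

lemma MeasureTheory.Integrable.locScale (hK : Integrable K) (hσ : 0 < σ) :
    Integrable fun y => w * (σ⁻¹ * K ((y - m) / σ)) :=
  ((hK.comp_sub_div_right m hσ.ne').const_mul _).const_mul _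

lemma locScale_mul_log_eq (y : ℝ) :
    w * (σ⁻¹ * K ((y - m) / σ)) * log (w * (σ⁻¹ * K ((y - m) / σ))) =
      K ((y - m) / σ) * (w * σ⁻¹ * log (w * σ⁻¹)) +
        w * σ⁻¹ * (K ((y - m) / σ) * log (K ((y - m) / σ))) := by
  rw [← mul_assoc, mul_log_mul]

lemma MeasureTheory.Integrable.locScale_mul_log (hK : Integrable K)
    (hK_log : Integrable fun x => K x * log (K x)) (hσ : 0 < σ) :
    Integrable fun y => w * (σ⁻¹ * K ((y - m) / σ)) * log (w * (σ⁻¹ * K ((y - m) / σ))) :=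
  (((hK.comp_sub_div_right m hσ.ne').mul_const _).add
    ((hK_log.comp_sub_div_right m hσ.ne').const_mul _)).congr
    (ae_of_all _ fun y => (locScale_mul_log_eq w m y).symm)

lemma integral_locScale_mul_log (hK : Integrable K) (hK1 : ∫ x, K x = 1)
    (hK_log : Integrable fun x => K x * log (K x)) (hw : w ≠ 0) (hσ : 0 < σ) :
    ∫ y, w * (σ⁻¹ * K ((y - m) / σ)) * log (w * (σ⁻¹ * K ((y - m) / σ))) =
      w * ((∫ x, K x * log (K x)) + log w - log σ) := by
  rw [integral_congr_ae (ae_of_all _ (locScale_mul_log_eq w m)),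
    integral_add ((hK.comp_sub_div_right m hσ.ne').mul_const _)
      ((hK_log.comp_sub_div_right m hσ.ne').const_mul _), integral_mul_const, integral_const_mul,
    integral_comp_sub_div_right K m hσ, integral_comp_sub_div_right (fun x => K x * log (K x)) m hσ,
    hK1, log_mul hw (inv_ne_zero hσ.ne'), log_inv]
  field_simp
  ring

lemma setIntegral_compl_ball_locScale (R : ℝ) (hσ : 0 < σ) :
    ∫ y in (Metric.ball m (R * σ))ᶜ, w * (σ⁻¹ * K ((y - m) / σ)) =
      w * ∫ x in {x | R ≤ |x|}, K x := by
  have hind : (Metric.ball m (R * σ))ᶜ.indicator (fun y => w * (σ⁻¹ * K ((y - m) / σ))) =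
      fun y => w * (σ⁻¹ * {x : ℝ | R ≤ |x|}.indicator K ((y - m) / σ)) := by
    ext y
    have hmem : y ∈ (Metric.ball m (R * σ))ᶜ ↔ (y - m) / σ ∈ {x : ℝ | R ≤ |x|} := by
      simp [Real.dist_eq, abs_div, abs_of_pos hσ, le_div_iff₀ hσ]
    by_cases hy : y ∈ (Metric.ball m (R * σ))ᶜ
    · rw [indicator_of_mem hy, indicator_of_mem (hmem.1 hy)]
    · rw [indicator_of_notMem hy, indicator_of_notMem (mt hmem.2 hy), mul_zero, mul_zero]
  rw [← integral_indicator measurableSet_ball.compl, hind,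
    integral_locScale (K := {x : ℝ | R ≤ |x|}.indicator K) w m hσ,
    integral_indicator (measurableSet_le measurable_const continuous_abs.measurable)]

end LocationScale

theorem tendsto_setIntegral_abs_ge_atTop {E : Type*} [NormedAddCommGroup E] [NormedSpace ℝ E]
    {ν : Measure ℝ} {f : ℝ → E} (hf : Integrable f ν) :
    Tendsto (fun R => ∫ x in {x | R ≤ |x|}, f x ∂ν) atTop (𝓝 0) := by
  have h := tendsto_setIntegral_of_antitone (μ := ν) (f := f) (s := fun R : ℝ => {x | R ≤ |x|})
    (fun R => measurableSet_le measurable_const continuous_abs.measurable)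
    (fun R R' hRR' x hx => le_trans hRR' hx) ⟨0, hf.integrableOn⟩
  have hempty : (⋂ R : ℝ, {x : ℝ | R ≤ |x|}) = ∅ :=
    eq_empty_of_forall_notMem fun x hx => by
      have := mem_iInter.1 hx (|x| + 1)
      simp only [mem_ofPred_eq] at this
      linarith
  rwa [hempty, setIntegral_empty] at h

theorem Metric.pairwise_disjoint_ball {ι X : Type*} [PseudoMetricSpace X] {c : ι → X} {r : ι → ℝ}
    (h : ∀ i j, i ≠ j → 2 * r i ≤ dist (c i) (c j)) :
    Pairwise (Disjoint on fun i => Metric.ball (c i) (r i)) := fun i j hij =>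
  Metric.ball_disjoint_ball <| by
    linarith [h i j hij, h j i hij.symm, dist_comm (c i) (c j)]

section Mixture

variable {ι : Type*} [Fintype ι] {w μ σ : ι → ℝ} {K : ℝ → ℝ}

lemma sum_integral_locScale_mul_log (hw : ∀ i, 0 < w i) (hw1 : ∑ i, w i = 1)
    (hK : Integrable K) (hK1 : ∫ x, K x = 1) (hK_log : Integrable fun x => K x * log (K x))
    (hσ : ∀ i, 0 < σ i) :
    ∑ i, ∫ y, w i * ((σ i)⁻¹ * K ((y - μ i) / σ i)) *
        log (w i * ((σ i)⁻¹ * K ((y - μ i) / σ i))) =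
      (∫ x, K x * log (K x)) + ∑ i, w i * log (w i) - ∑ i, w i * log (σ i) := by
  simp only [integral_locScale_mul_log _ _ hK hK1 hK_log (hw _).ne' (hσ _), mul_sub, mul_add,
    Finset.sum_sub_distrib, Finset.sum_add_distrib, ← Finset.sum_mul, hw1, one_mul]

theorem integral_mixture_mul_log_ge (hw : ∀ i, 0 < w i) (hw1 : ∑ i, w i = 1)
    (hK0 : ∀ x, 0 ≤ K x) (hK : Integrable K) (hK1 : ∫ x, K x = 1)
    (hK_log : Integrable fun x => K x * log (K x)) (hσ : ∀ i, 0 < σ i)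
    (hp_log : Integrable fun y => (∑ i, w i * ((σ i)⁻¹ * K ((y - μ i) / σ i))) *
      log (∑ i, w i * ((σ i)⁻¹ * K ((y - μ i) / σ i)))) :
    (∫ x, K x * log (K x)) + ∑ i, w i * log (w i) - ∑ i, w i * log (σ i) ≤
      ∫ y, (∑ i, w i * ((σ i)⁻¹ * K ((y - μ i) / σ i))) *
        log (∑ i, w i * ((σ i)⁻¹ * K ((y - μ i) / σ i))) := by
  rw [← sum_integral_locScale_mul_log hw hw1 hK hK1 hK_log hσ]
  exact sum_integral_mul_log_le_integral_mul_log_sum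
    (fun i y => mul_nonneg (hw i).le (mul_nonneg (inv_nonneg.2 (hσ i).le) (hK0 _)))
    (fun i => hK.locScale_mul_log _ _ hK_log (hσ i)) hp_log

theorem integral_mixture_mul_log_le (hw : ∀ i, 0 < w i) (hw1 : ∑ i, w i = 1)
    (hK0 : ∀ x, 0 ≤ K x) (hK : Integrable K) (hK1 : ∫ x, K x = 1)
    (hK_log : Integrable fun x => K x * log (K x)) (hσ : ∀ i, 0 < σ i)
    (hp_log : Integrable fun y => (∑ i, w i * ((σ i)⁻¹ * K ((y - μ i) / σ i))) *
      log (∑ i, w i * ((σ i)⁻¹ * K ((y - μ i) / σ i))))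
    {R : ℝ} (hsep : ∀ i j, i ≠ j → 2 * (R * σ i) ≤ |μ i - μ j|) {s : ℝ} (hs : 0 < s) :
    ∫ y, (∑ i, w i * ((σ i)⁻¹ * K ((y - μ i) / σ i))) *
        log (∑ i, w i * ((σ i)⁻¹ * K ((y - μ i) / σ i))) ≤
      (∫ x, K x * log (K x)) + ∑ i, w i * log (w i) - ∑ i, w i * log (σ i) +
        Fintype.card ι * s + 2 * s⁻¹ * ∫ x in {x | R ≤ |x|}, K x := by
  have hdisj : Pairwise (Disjoint on fun i => Metric.ball (μ i) (R * σ i)) :=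
    Metric.pairwise_disjoint_ball fun i j hij => by rw [Real.dist_eq]; exact hsep i j hij
  have hmass : ∫ y, ∑ i, w i * ((σ i)⁻¹ * K ((y - μ i) / σ i)) = 1 := by
    rw [integral_finsetSum _ fun i _ => hK.locScale _ _ (hσ i)]
    simp only [integral_locScale _ _ (hσ _), hK1, mul_one, hw1]
  have htail : ∑ i, ∫ y in (Metric.ball (μ i) (R * σ i))ᶜ, w i * ((σ i)⁻¹ * K ((y - μ i) / σ i)) =
      ∫ x in {x | R ≤ |x|}, K x := by
    simp only [setIntegral_compl_ball_locScale _ _ R (hσ _), ← Finset.sum_mul, hw1, one_mul]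
  have h := integral_mul_log_sum_le (fun i => measurableSet_ball) hdisj
    (fun i y => mul_nonneg (hw i).le (mul_nonneg (inv_nonneg.2 (hσ i).le) (hK0 _)))
    (fun i => hK.locScale _ _ (hσ i)) (fun i => hK.locScale_mul_log _ _ hK_log (hσ i)) hp_log hs
  rwa [sum_integral_locScale_mul_log hw hw1 hK hK1 hK_log hσ, hmass, mul_one, htail] at h

end Mixture

theorem mixture_entropy_converges_to_upper_bound_general
    (N : ℕ) (w : Fin N → ℝ)
    (hwpos : ∀ n, 0 < w n) (hwsum : ∑ n, w n = 1)
    (K : ℝ → ℝ) (hKnonneg : ∀ x, 0 ≤ K x) (hKdens : ∫ x, K x = 1)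
    (hKent : Integrable (fun x => K x * Real.log (K x))) :
    (∀ μ σ : Fin N → ℝ, (∀ n, 0 < σ n) → StrictMono μ →
      Integrable (fun y => (∑ n, w n * ((σ n)⁻¹ * K ((y - μ n) / σ n))) *
        Real.log (∑ n, w n * ((σ n)⁻¹ * K ((y - μ n) / σ n)))) →
      (-∫ y, (∑ n, w n * ((σ n)⁻¹ * K ((y - μ n) / σ n))) *
          Real.log (∑ n, w n * ((σ n)⁻¹ * K ((y - μ n) / σ n)))) ≤
        (-∫ x, K x * Real.log (K x)) + (∑ n, w n * Real.log (σ n)) +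
          (-∑ n, w n * Real.log (w n))) ∧
    (∀ ε > (0:ℝ), ∃ M : ℝ, ∀ μ σ : Fin N → ℝ, (∀ n, 0 < σ n) → StrictMono μ →
      Integrable (fun y => (∑ n, w n * ((σ n)⁻¹ * K ((y - μ n) / σ n))) *
        Real.log (∑ n, w n * ((σ n)⁻¹ * K ((y - μ n) / σ n)))) →
      (∀ n m, n ≠ m → M * σ n ≤ |μ n - μ m|) →
      ((-∫ x, K x * Real.log (K x)) + (∑ n, w n * Real.log (σ n)) +
          (-∑ n, w n * Real.log (w n))) -
        (-∫ y, (∑ n, w n * ((σ n)⁻¹ * K ((y - μ n) / σ n))) *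
          Real.log (∑ n, w n * ((σ n)⁻¹ * K ((y - μ n) / σ n)))) < ε) := by
  have hK : Integrable K := .of_integral_ne_zero (by rw [hKdens]; exact one_ne_zero)
  refine ⟨fun μ σ hσ _ hp_log => ?_, fun ε hε => ?_⟩
  · linarith [integral_mixture_mul_log_ge hwpos hwsum hKnonneg hK hKdens hKent hσ hp_log]
  set s := ε / (N + 1)
  have hs : 0 < s := by positivity
  have hNs : N * s < ε := by
    calc N * s < (N + 1) * s := by linarith
      _ = ε := mul_div_cancel₀ _ (by positivity)
  have hlim : Tendsto (fun R => N * s + 2 * s⁻¹ * ∫ x in {x | R ≤ |x|}, K x) atTop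
      (𝓝 (N * s)) := by
    simpa using tendsto_const_nhds.add ((tendsto_setIntegral_abs_ge_atTop hK).const_mul (2 * s⁻¹))
  obtain ⟨R, hR⟩ := (hlim.eventually (gt_mem_nhds hNs)).exists
  refine ⟨2 * R, fun μ σ hσ _ hp_log hsep => ?_⟩
  have h := integral_mixture_mul_log_le hwpos hwsum hKnonneg hK hKdens hKent hσ hp_log
    (fun i j hij => (mul_assoc 2 R (σ i)).symm.trans_le (hsep i j hij)) hs
  rw [Fintype.card_fin] at h
  linarith

/-- Corollary: the mixture entropy is bounded above by `H(K) + ∑ πₙ log σₙ + h(π)`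
and converges to this bound as `minₙ (dₙ/σₙ) → ∞`, where `dₙ` is the distance
from `μₙ` to the nearest other mode center. -/
theorem mixture_entropy_converges_to_upper_bound
    (N : ℕ) (hN : 0 < N) (w : Fin N → ℝ)
    (hwpos : ∀ n, 0 < w n) (hwsum : ∑ n, w n = 1)
    (K : ℝ → ℝ) (hKnonneg : ∀ x, 0 ≤ K x) (hKdens : ∫ x, K x = 1)
    (hKbdd : BddAbove (Set.range K))
    (hKent : Integrable (fun x => K x * Real.log (K x))) :
    (∀ μ σ : Fin N → ℝ, (∀ n, 0 < σ n) → StrictMono μ →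
      Integrable (fun y => (∑ n, w n * ((σ n)⁻¹ * K ((y - μ n) / σ n))) *
        Real.log (∑ n, w n * ((σ n)⁻¹ * K ((y - μ n) / σ n)))) →
      (-∫ y, (∑ n, w n * ((σ n)⁻¹ * K ((y - μ n) / σ n))) *
          Real.log (∑ n, w n * ((σ n)⁻¹ * K ((y - μ n) / σ n)))) ≤
        (-∫ x, K x * Real.log (K x)) + (∑ n, w n * Real.log (σ n)) +
          (-∑ n, w n * Real.log (w n))) ∧
    (∀ ε > (0:ℝ), ∃ M : ℝ, ∀ μ σ : Fin N → ℝ, (∀ n, 0 < σ n) → StrictMono μ →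
      Integrable (fun y => (∑ n, w n * ((σ n)⁻¹ * K ((y - μ n) / σ n))) *
        Real.log (∑ n, w n * ((σ n)⁻¹ * K ((y - μ n) / σ n)))) →
      (∀ n m, n ≠ m → M * σ n ≤ |μ n - μ m|) →
      ((-∫ x, K x * Real.log (K x)) + (∑ n, w n * Real.log (σ n)) +
          (-∑ n, w n * Real.log (w n))) -
        (-∫ y, (∑ n, w n * ((σ n)⁻¹ * K ((y - μ n) / σ n))) *
          Real.log (∑ n, w n * ((σ n)⁻¹ * K ((y - μ n) / σ n)))) < ε) :=
  mixture_entropy_converges_to_upper_bound_general N w hwpos hwsum K hKnonneg hKdens hKent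
end

section
/- Let U be a discrete random vector in ℝ^K with finite support 𝒰, and suppose there exist r ≥ 1 disjoint subsets 𝒰_1,…,𝒰_r of 𝒰, each with at least 2 elements, such that the linear span V of the vectors {u − u_j : u ∈ 𝒰_j ∖ {u_j}, j = 1,…,r} has dimension K − 1 (for arbitrary choices u_j ∈ 𝒰_j). Then for any unit vector w* orthogonal to V, there exist a neighborhood 𝒲 of w* in the unit sphere and α > 0 such that h(w·U) ≥ h(w*·U) + α for all w ∈ 𝒲 with w ≠ w*. -/
open MeasureTheory Real
open scoped Classical

/-- Discrete Shannon entropy of the projection `w·U` of a finitely supported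
random vector with support `𝒰` and probability weights `P`. -/
noncomputable def projEntropy {K : ℕ} (𝒰 : Finset (EuclideanSpace ℝ (Fin K)))
    (P : EuclideanSpace ℝ (Fin K) → ℝ) (w : EuclideanSpace ℝ (Fin K)) : ℝ :=
  -∑ v ∈ 𝒰.image (fun u => (inner ℝ w u : ℝ)),
    (∑ u ∈ 𝒰.filter (fun u => (inner ℝ w u : ℝ) = v), P u) *
      Real.log (∑ u ∈ 𝒰.filter (fun u => (inner ℝ w u : ℝ) = v), P u)

lemma entropy_rewrite {E : Type*} (𝒰 : Finset E) (P : E → ℝ) (f : E → ℝ) :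
    ∑ v ∈ 𝒰.image f, (∑ u ∈ 𝒰.filter (fun u => f u = v), P u) *
        Real.log (∑ u ∈ 𝒰.filter (fun u => f u = v), P u)
    = ∑ u ∈ 𝒰, P u * Real.log (∑ x ∈ 𝒰.filter (fun x => f x = f u), P x) := by
  classical
  rw [← Finset.sum_fiberwise_of_maps_to (g := f)
      (fun u hu => Finset.mem_image_of_mem f hu)
      (fun u => P u * Real.log (∑ x ∈ 𝒰.filter (fun x => f x = f u), P x))]
  refine Finset.sum_congr rfl fun v _ => ?_
  rw [Finset.sum_mul]
  refine Finset.sum_congr rfl fun u hu => ?_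
  have h : f u = v := (Finset.mem_filter.mp hu).2
  rw [h]

lemma entropy_gain {E : Type*} (𝒰 : Finset E) (P : E → ℝ) (hPpos : ∀ u ∈ 𝒰, 0 < P u)
    (f g : E → ℝ)
    (href : ∀ u ∈ 𝒰, ∀ x ∈ 𝒰, f x = f u → g x = g u)
    (a : E) (ha : a ∈ 𝒰) :
    ∑ u ∈ 𝒰, P u * Real.log (∑ x ∈ 𝒰.filter (fun x => f x = f u), P x)
      + P a * (Real.log (∑ x ∈ 𝒰.filter (fun x => g x = g a), P x)
          - Real.log (∑ x ∈ 𝒰.filter (fun x => f x = f a), P x))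
    ≤ ∑ u ∈ 𝒰, P u * Real.log (∑ x ∈ 𝒰.filter (fun x => g x = g u), P x) := by
  classical
  set mf : E → ℝ := fun u => ∑ x ∈ 𝒰.filter (fun x => f x = f u), P x with hmf
  set mg : E → ℝ := fun u => ∑ x ∈ 𝒰.filter (fun x => g x = g u), P x with hmg
  have hsubfib : ∀ u ∈ 𝒰, 𝒰.filter (fun x => f x = f u) ⊆ 𝒰.filter (fun x => g x = g u) := by
    intro u hu x hx
    rcases Finset.mem_filter.mp hx with ⟨hx𝒰, hxf⟩
    exact Finset.mem_filter.mpr ⟨hx𝒰, href u hu x hx𝒰 hxf⟩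
  have hmfpos : ∀ u ∈ 𝒰, 0 < mf u := by
    intro u hu
    refine Finset.sum_pos (fun x hx => hPpos x (Finset.mem_filter.mp hx).1) ⟨u, ?_⟩
    exact Finset.mem_filter.mpr ⟨hu, rfl⟩
  have hle : ∀ u ∈ 𝒰, mf u ≤ mg u := by
    intro u hu
    exact Finset.sum_le_sum_of_subset_of_nonneg (hsubfib u hu)
      (fun x hx _ => (hPpos x (Finset.mem_filter.mp hx).1).le)
  have hterm : ∀ u ∈ 𝒰, 0 ≤ P u * (Real.log (mg u) - Real.log (mf u)) := by
    intro u hu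
    have := Real.log_le_log (hmfpos u hu) (hle u hu)
    have := (hPpos u hu).le
    nlinarith
  have hsum : P a * (Real.log (mg a) - Real.log (mf a))
      ≤ ∑ u ∈ 𝒰, P u * (Real.log (mg u) - Real.log (mf u)) :=
    Finset.single_le_sum hterm ha
  have hexp : ∑ u ∈ 𝒰, P u * (Real.log (mg u) - Real.log (mf u))
      = ∑ u ∈ 𝒰, P u * Real.log (mg u) - ∑ u ∈ 𝒰, P u * Real.log (mf u) := by
    rw [← Finset.sum_sub_distrib]
    exact Finset.sum_congr rfl fun u _ => by ring
  linarith [hsum, hexp.le, hexp.ge]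

/-- Lemma 2 of the paper: if `w*` is a unit vector orthogonal to a `(K−1)`-dimensional
span of differences within disjoint groups of atoms, then `h(w·U)` exceeds `h(w*·U)`
by a fixed `α > 0` on a punctured neighborhood of `w*` in the unit sphere. -/
theorem discrete_entropy_local_minimum
    (K : ℕ) (𝒰 : Finset (EuclideanSpace ℝ (Fin K)))
    (P : EuclideanSpace ℝ (Fin K) → ℝ)
    (hPpos : ∀ u ∈ 𝒰, 0 < P u) (hPsum : ∑ u ∈ 𝒰, P u = 1)
    (r : ℕ) (hr : 1 ≤ r)
    (𝒰sub : Fin r → Finset (EuclideanSpace ℝ (Fin K)))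
    (hsub : ∀ j, 𝒰sub j ⊆ 𝒰)
    (hdisj : ∀ i j, i ≠ j → Disjoint (𝒰sub i) (𝒰sub j))
    (hcard : ∀ j, 2 ≤ (𝒰sub j).card)
    (u₀ : Fin r → EuclideanSpace ℝ (Fin K)) (hu₀ : ∀ j, u₀ j ∈ 𝒰sub j)
    (V : Submodule ℝ (EuclideanSpace ℝ (Fin K)))
    (hV : V = Submodule.span ℝ {v | ∃ j, ∃ u ∈ 𝒰sub j, u ≠ u₀ j ∧ v = u - u₀ j})
    (hdim : Module.finrank ℝ V = K - 1)
    (wstar : EuclideanSpace ℝ (Fin K)) (hwstar : ‖wstar‖ = 1)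
    (horth : ∀ v ∈ V, (inner ℝ wstar v : ℝ) = 0) :
    ∃ ε > (0:ℝ), ∃ α > (0:ℝ), ∀ w : EuclideanSpace ℝ (Fin K),
      ‖w‖ = 1 → ‖w - wstar‖ < ε → w ≠ wstar →
      projEntropy 𝒰 P wstar + α ≤ projEntropy 𝒰 P w := by
  classical
  -- V is the orthogonal complement of wstar
  have hwne0 : wstar ≠ 0 := fun h => by simp [h] at hwstar
  have hVle : V ≤ (ℝ ∙ wstar)ᗮ := by
    intro x hx
    rw [Submodule.mem_orthogonal]
    intro y hy
    obtain ⟨c, rfl⟩ := Submodule.mem_span_singleton.mp hy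
    rw [real_inner_smul_left, horth x hx, mul_zero]
  have hVeq : V = (ℝ ∙ wstar)ᗮ := by
    have h1 : Module.finrank ℝ (ℝ ∙ wstar) = 1 := finrank_span_singleton hwne0
    have h2 : Module.finrank ℝ (ℝ ∙ wstar) + Module.finrank ℝ (ℝ ∙ wstar)ᗮ
        = Module.finrank ℝ (EuclideanSpace ℝ (Fin K)) :=
      Submodule.finrank_add_finrank_orthogonal _
    have h3 : Module.finrank ℝ (EuclideanSpace ℝ (Fin K)) = K := by
      simp [finrank_euclideanSpace]
    exact Submodule.eq_of_le_of_finrank_eq hVle (by omega)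
  -- basic nonemptiness
  have hj0 : (0:ℕ) < r := hr
  set j0 : Fin r := ⟨0, hj0⟩ with hj0def
  have hu₀𝒰 : ∀ j, u₀ j ∈ 𝒰 := fun j => hsub j (hu₀ j)
  have h𝒰ne : 𝒰.Nonempty := ⟨u₀ j0, hu₀𝒰 j0⟩
  -- minP
  set minP : ℝ := (𝒰.image P).min' (h𝒰ne.image P) with hminPdef
  have hminP_le : ∀ u ∈ 𝒰, minP ≤ P u := fun u hu =>
    Finset.min'_le _ _ (Finset.mem_image_of_mem P hu)
  have hminP_pos : 0 < minP := by
    obtain ⟨x, hx, hxe⟩ := Finset.mem_image.mp ((𝒰.image P).min'_mem (h𝒰ne.image P))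
    rw [hminPdef, ← hxe]
    exact hPpos x hx
  -- α
  set m : Finset (EuclideanSpace ℝ (Fin K)) → ℝ := fun S => ∑ x ∈ S, P x with hmdef
  have hmpos : ∀ S : Finset (EuclideanSpace ℝ (Fin K)), S ⊆ 𝒰 → S.Nonempty → 0 < m S := fun S hS hSne =>
    Finset.sum_pos (fun x hx => hPpos x (hS hx)) hSne
  set pairs : Finset (Finset (EuclideanSpace ℝ (Fin K)) × Finset (EuclideanSpace ℝ (Fin K))) :=
    (𝒰.powerset ×ˢ 𝒰.powerset).filter (fun p => p.1.Nonempty ∧ p.1 ⊆ p.2 ∧ p.1 ≠ p.2)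
    with hpairsdef
  have hmempairs : ∀ T S : Finset (EuclideanSpace ℝ (Fin K)), T ⊆ 𝒰 → S ⊆ 𝒰 → T.Nonempty → T ⊆ S → T ≠ S →
      (T, S) ∈ pairs := by
    intro T S hT hS hne hTS hTneS
    rw [hpairsdef, Finset.mem_filter, Finset.mem_product]
    exact ⟨⟨Finset.mem_powerset.mpr hT, Finset.mem_powerset.mpr hS⟩, hne, hTS, hTneS⟩
  have hpairsne : pairs.Nonempty := by
    refine ⟨({u₀ j0}, 𝒰sub j0), hmempairs _ _ ?_ (hsub j0) ⟨_, Finset.mem_singleton_self _⟩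
      (Finset.singleton_subset_iff.mpr (hu₀ j0)) ?_⟩
    · exact Finset.singleton_subset_iff.mpr (hu₀𝒰 j0)
    · intro h
      have := hcard j0
      rw [← h, Finset.card_singleton] at this
      omega
  set vals : Finset ℝ :=
    pairs.image (fun p => minP * (Real.log (m p.2) - Real.log (m p.1))) with hvalsdef
  set α : ℝ := vals.min' (hpairsne.image _) with hαdef
  have hval_pos : ∀ y ∈ vals, 0 < y := by
    intro y hy
    obtain ⟨p, hp, rfl⟩ := Finset.mem_image.mp hy
    rw [hpairsdef, Finset.mem_filter, Finset.mem_product] at hp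
    obtain ⟨⟨hT, hS⟩, hTne, hTS, hTneS⟩ := hp
    rw [Finset.mem_powerset] at hT hS
    have hmT : 0 < m p.1 := hmpos _ hT hTne
    have hlt : m p.1 < m p.2 := by
      obtain ⟨x, hxS, hxT⟩ := Finset.exists_of_ssubset (ssubset_of_subset_of_ne hTS hTneS)
      exact Finset.sum_lt_sum_of_subset hTS hxS hxT (hPpos x (hS hxS))
        (fun y hy _ => (hPpos y (hS hy)).le)
    have := Real.log_lt_log hmT hlt
    nlinarith
  have hαpos : 0 < α := hval_pos _ (vals.min'_mem _)
  -- ε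
  set q : EuclideanSpace ℝ (Fin K) × EuclideanSpace ℝ (Fin K) → ℝ := fun p =>
    if (inner ℝ wstar p.1 : ℝ) = inner ℝ wstar p.2 then 1 else |(inner ℝ wstar (p.1 - p.2) : ℝ)|
    with hqdef
  set dvals : Finset ℝ := insert (1:ℝ) ((𝒰 ×ˢ 𝒰).image q) with hdvalsdef
  have hdvalsne : dvals.Nonempty := ⟨1, Finset.mem_insert_self _ _⟩
  set δ : ℝ := dvals.min' hdvalsne with hδdef
  have hδpos : 0 < δ := by
    have : ∀ y ∈ dvals, 0 < y := by
      intro y hy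
      rw [hdvalsdef, Finset.mem_insert] at hy
      rcases hy with rfl | hy
      · norm_num
      obtain ⟨p, _, rfl⟩ := Finset.mem_image.mp hy
      rw [hqdef]
      by_cases h : (inner ℝ wstar p.1 : ℝ) = inner ℝ wstar p.2
      · simp [h]
      · have : (inner ℝ wstar (p.1 - p.2) : ℝ) ≠ 0 := by
          rw [inner_sub_right]
          exact sub_ne_zero.mpr h
        simp only [if_neg h]
        exact abs_pos.mpr this
    exact this _ (dvals.min'_mem _)
  have hδ1 : δ ≤ 1 := Finset.min'_le _ _ (Finset.mem_insert_self _ _)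
  set M : ℝ := (𝒰.image (fun u => ‖u‖)).max' (h𝒰ne.image _) with hMdef
  have hM : ∀ u ∈ 𝒰, ‖u‖ ≤ M := fun u hu =>
    Finset.le_max' _ _ (Finset.mem_image_of_mem _ hu)
  have hM0 : 0 ≤ M := le_trans (norm_nonneg _) (hM _ (hu₀𝒰 j0))
  set ε : ℝ := min 1 (δ / (2*M+1)) with hεdef
  have hεpos : 0 < ε := lt_min one_pos (div_pos hδpos (by linarith))
  have hε1 : ε ≤ 1 := min_le_left _ _
  refine ⟨ε, hεpos, α, hαpos, ?_⟩
  intro w hw hwε hwne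
  -- refinement property
  have href : ∀ u ∈ 𝒰, ∀ x ∈ 𝒰, (inner ℝ w x : ℝ) = inner ℝ w u →
      (inner ℝ wstar x : ℝ) = inner ℝ wstar u := by
    intro u hu x hx hfx
    by_contra hne
    have hmem : q (x, u) ∈ dvals := by
      rw [hdvalsdef]
      exact Finset.mem_insert_of_mem (Finset.mem_image_of_mem q
        (Finset.mem_product.mpr ⟨hx, hu⟩))
    have hq : q (x, u) = |(inner ℝ wstar (x - u) : ℝ)| := by
      rw [hqdef]; exact if_neg hne
    have hδle : δ ≤ |(inner ℝ wstar (x - u) : ℝ)| := hq ▸ Finset.min'_le _ _ hmem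
    have hzero : (inner ℝ w (x - u) : ℝ) = 0 := by
      rw [inner_sub_right, hfx, sub_self]
    have heq : (inner ℝ wstar (x - u) : ℝ) = inner ℝ (wstar - w) (x - u) := by
      rw [inner_sub_left, hzero, sub_zero]
    have hcs : |(inner ℝ (wstar - w) (x - u) : ℝ)| ≤ ‖wstar - w‖ * ‖x - u‖ :=
      abs_real_inner_le_norm _ _
    have hnw : ‖wstar - w‖ < ε := by rw [norm_sub_rev]; exact hwε
    have hnxu : ‖x - u‖ ≤ 2 * M := by
      calc ‖x - u‖ ≤ ‖x‖ + ‖u‖ := norm_sub_le _ _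
        _ ≤ 2 * M := by have := hM x hx; have := hM u hu; linarith
    have hεδ : ε * (2*M+1) ≤ δ := by
      have : ε ≤ δ / (2*M+1) := min_le_right _ _
      rw [le_div_iff₀ (by linarith : (0:ℝ) < 2*M+1)] at this
      exact this
    have h1 : δ ≤ ‖wstar - w‖ * ‖x - u‖ := by
      calc δ ≤ |(inner ℝ wstar (x - u) : ℝ)| := hδle
        _ = |(inner ℝ (wstar - w) (x - u) : ℝ)| := by rw [heq]
        _ ≤ ‖wstar - w‖ * ‖x - u‖ := hcs
    nlinarith [norm_nonneg (wstar - w), norm_nonneg (x - u),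
      mul_le_mul_of_nonneg_left hnxu (norm_nonneg (wstar - w))]
  -- strict witness
  obtain ⟨j, u, hu, hwdiff⟩ :
      ∃ j, ∃ u ∈ 𝒰sub j, (inner ℝ w u : ℝ) ≠ inner ℝ w (u₀ j) := by
    by_contra hall
    push_neg at hall
    have hVw : ∀ v ∈ V, (inner ℝ w v : ℝ) = 0 := by
      intro v hv
      rw [hV] at hv
      induction hv using Submodule.span_induction with
      | mem x hx =>
        obtain ⟨j, u, hu, hneu, rfl⟩ := hx
        rw [inner_sub_right, hall j u hu, sub_self]
      | zero => exact inner_zero_right _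
      | add x y _ _ hx hy => rw [inner_add_right, hx, hy, add_zero]
      | smul c x _ hx => rw [real_inner_smul_right, hx, mul_zero]
    set c : ℝ := (inner ℝ wstar w : ℝ) with hc
    set v : EuclideanSpace ℝ (Fin K) := w - c • wstar with hvdef
    have hwsv : (inner ℝ wstar v : ℝ) = 0 := by
      rw [hvdef, inner_sub_right, real_inner_smul_right, real_inner_self_eq_norm_sq, hwstar]
      ring
    have hvV : v ∈ V := by
      rw [hVeq, Submodule.mem_orthogonal]
      intro y hy
      obtain ⟨d, rfl⟩ := Submodule.mem_span_singleton.mp hy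
      rw [real_inner_smul_left, hwsv, mul_zero]
    have hwv : (inner ℝ w v : ℝ) = 0 := hVw v hvV
    have hvv : (inner ℝ v v : ℝ) = 0 := by
      have : (inner ℝ v v : ℝ) = inner ℝ w v - c * inner ℝ wstar v := by
        rw [hvdef]
        rw [inner_sub_left, real_inner_smul_left]
      rw [this, hwv, hwsv]
      ring
    have hv0 : v = 0 := by rwa [inner_self_eq_zero] at hvv
    have hwc : w = c • wstar := sub_eq_zero.mp hv0
    have hcabs : |c| = 1 := by
      have : ‖w‖ = ‖c‖ * ‖wstar‖ := by rw [hwc, norm_smul]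
      rw [hw, hwstar, mul_one] at this
      simpa [Real.norm_eq_abs] using this.symm
    rcases abs_eq (by norm_num : (0:ℝ) ≤ 1) |>.mp hcabs with h1 | h1
    · apply hwne
      rw [hwc, h1, one_smul]
    · rw [hwc, h1] at hwε
      have h2 : ‖(-1 : ℝ) • wstar - wstar‖ = 2 := by
        have h3 : (-1 : ℝ) • wstar - wstar = -((2:ℝ) • wstar) := by module
        rw [h3, norm_neg, norm_smul, hwstar]
        simp [Real.norm_eq_abs]
      rw [h2] at hwε
      linarith
  have hu𝒰 : u ∈ 𝒰 := hsub j hu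
  have hneu : u ≠ u₀ j := fun h => hwdiff (by rw [h])
  have hstar_eq : (inner ℝ wstar u : ℝ) = inner ℝ wstar (u₀ j) := by
    have hmem : u - u₀ j ∈ V := by
      rw [hV]
      exact Submodule.subset_span ⟨j, u, hu, hneu, rfl⟩
    have := horth _ hmem
    rw [inner_sub_right] at this
    linarith
  -- assemble
  set f : EuclideanSpace ℝ (Fin K) → ℝ := fun x => (inner ℝ w x : ℝ) with hfdef
  set g : EuclideanSpace ℝ (Fin K) → ℝ := fun x => (inner ℝ wstar x : ℝ) with hgdef
  have href' : ∀ a ∈ 𝒰, ∀ x ∈ 𝒰, f x = f a → g x = g a := href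
  set T : Finset (EuclideanSpace ℝ (Fin K)) := 𝒰.filter (fun x => f x = f u) with hTdef
  set S : Finset (EuclideanSpace ℝ (Fin K)) := 𝒰.filter (fun x => g x = g u) with hSdef
  have hTS : T ⊆ S := by
    intro x hx
    rcases Finset.mem_filter.mp hx with ⟨hx𝒰, hxf⟩
    exact Finset.mem_filter.mpr ⟨hx𝒰, href u hu𝒰 x hx𝒰 hxf⟩
  have hT𝒰 : T ⊆ 𝒰 := Finset.filter_subset _ _
  have hS𝒰 : S ⊆ 𝒰 := Finset.filter_subset _ _
  have hTne : T.Nonempty := ⟨u, Finset.mem_filter.mpr ⟨hu𝒰, rfl⟩⟩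
  have hbS : u₀ j ∈ S := Finset.mem_filter.mpr ⟨hu₀𝒰 j, hstar_eq.symm⟩
  have hbT : u₀ j ∉ T := by
    intro h
    exact hwdiff ((Finset.mem_filter.mp h).2).symm
  have hTneS : T ≠ S := fun h => hbT (h ▸ hbS)
  have hpairmem : (T, S) ∈ pairs := hmempairs T S hT𝒰 hS𝒰 hTne hTS hTneS
  have hαle : α ≤ minP * (Real.log (m S) - Real.log (m T)) := by
    rw [hαdef]
    exact Finset.min'_le _ _ (Finset.mem_image_of_mem _ hpairmem)
  have hlogd : 0 ≤ Real.log (m S) - Real.log (m T) := by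
    have hmT : 0 < m T := hmpos T hT𝒰 hTne
    have hmle : m T ≤ m S :=
      Finset.sum_le_sum_of_subset_of_nonneg hTS (fun x hx _ => (hPpos x (hS𝒰 hx)).le)
    linarith [Real.log_le_log hmT hmle]
  have hgap : α ≤ P u * (Real.log (m S) - Real.log (m T)) :=
    le_trans hαle (mul_le_mul_of_nonneg_right (hminP_le u hu𝒰) hlogd)
  have hgain := entropy_gain 𝒰 P hPpos f g href' u hu𝒰
  rw [show projEntropy 𝒰 P w = -∑ x ∈ 𝒰, P x * Real.log (∑ y ∈ 𝒰.filter (fun y => f y = f x), P y) by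
      rw [projEntropy, entropy_rewrite 𝒰 P f],
    show projEntropy 𝒰 P wstar = -∑ x ∈ 𝒰, P x * Real.log (∑ y ∈ 𝒰.filter (fun y => g y = g x), P y) by
      rw [projEntropy, entropy_rewrite 𝒰 P g]]
  have hmS : m S = ∑ x ∈ 𝒰.filter (fun x => g x = g u), P x := rfl
  have hmT : m T = ∑ x ∈ 𝒰.filter (fun x => f x = f u), P x := rfl
  rw [hmS, hmT] at hgap
  linarith [hgain, hgap]
end
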